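/- For every integer p ≥ 2 and every integer n ≥ 1, the number of decreasing p-ary labeled trees on [n] equals ∏_{j=0}^{n−1} (1 + (p−1)j); equivalently, y(n,n) = ∏_{j=0}^{n−1} (1 + (p−1)j). -/

import Mathlib

open scoped Classical

/-- A `p`-ary labeled forest: a finite set of vertices (labels, which are
natural numbers), where each non-root vertex has a parent together with a
slot position in `Fin p` (the `p` ordered, possibly empty, child positions),
each (parent, slot) pair is occupied by at most one child, and every vertex
reaches a root (a vertex with no parent) by iterating the parent map. -/
structure PForest (p : ℕ) where
  verts : Finset ℕ
  par : ℕ → Option (ℕ × Fin p)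
  par_eq_none_of_not_mem : ∀ v, v ∉ verts → par v = none
  par_mem : ∀ v ∈ verts, ∀ w s, par v = some (w, s) → w ∈ verts
  par_inj : ∀ u ∈ verts, ∀ v ∈ verts, ∀ w s,
      par u = some (w, s) → par v = some (w, s) → u = v
  reaches_root : ∀ v ∈ verts,
      ∃ k, par ((fun x => ((par x).map Prod.fst).getD x)^[k] v) = none

namespace PForest

variable {p : ℕ}

/-- One step from a vertex towards the root (identity on roots and
non-vertices). -/
def step (T : PForest p) (v : ℕ) : ℕ := ((T.par v).map Prod.fst).getD v

/-- The roots of the forest: vertices with no parent. -/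
def roots (T : PForest p) : Finset ℕ := T.verts.filter (fun v => T.par v = none)

/-- `v` belongs to the maximal decreasing subtree `MD(T)`: every edge on the
path from `v` up to its root goes from a smaller label (child) to a larger
label (parent). -/
def InMD (T : PForest p) (v : ℕ) : Prop :=
  v ∈ T.verts ∧ ∀ k w s, T.par (T.step^[k] v) = some (w, s) → T.step^[k] v < w

/-- The vertex set of the maximal decreasing subtree `MD(T)`. -/
noncomputable def mdSet (T : PForest p) : Finset ℕ :=
  T.verts.filter (fun v => T.InMD v)

/-- `T` is a `p`-ary labeled tree on `[n] = {1, …, n}`: its vertex set is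
`{1, …, n}` and it has exactly one root (and no root when `n = 0`, i.e. the
empty tree). -/
def IsTreeOn (T : PForest p) (n : ℕ) : Prop :=
  T.verts = Finset.Icc 1 n ∧ T.roots.card = min n 1

/-- `v` is a leaf of `T`: it has no children. -/
def IsLeaf (T : PForest p) (v : ℕ) : Prop := ∀ u s, T.par u ≠ some (v, s)

end PForest

/-- `t(n,k)`: the number of `p`-ary labeled trees on `[n]` whose maximal
decreasing subtree has exactly `k` vertices. -/
noncomputable def t (p n k : ℕ) : ℕ :=
  Nat.card {T : PForest p // T.IsTreeOn n ∧ T.mdSet.card = k}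

/-- `y(n,k)`: the number of `p`-ary labeled trees on `[n]` whose maximal
decreasing subtree has exactly `k` vertices and all of whose remaining
`n - k` vertices are (increasing) leaves; equivalently, trees obtained by
attaching `n - k` increasing leaves to a decreasing tree with `k` vertices. -/
noncomputable def y (p n k : ℕ) : ℕ :=
  Nat.card {T : PForest p // T.IsTreeOn n ∧ T.mdSet.card = k ∧
    ∀ v ∈ T.verts, ¬ T.InMD v → T.IsLeaf v}

/-- `f(n,k)`: the number of (unordered) forests on `[n]` consisting of `k`
`p`-ary labeled trees. -/
noncomputable def f (p n k : ℕ) : ℕ :=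
  Nat.card {T : PForest p // T.verts = Finset.Icc 1 n ∧ T.roots.card = k}

/-!
In a decreasing tree the smallest label `a` is a leaf and not the root (the root carries the
largest label), so deleting it yields a decreasing tree on the remaining labels together with a
free slot of that tree, the former position of `a`; attaching `a` at a free slot is the inverse
operation. A tree with `m` vertices has `m p` slots, of which `m - 1` are occupied by its
non-root vertices, hence `1 + (p - 1) m` free ones, and induction on the number of labels gives
the product. For a decreasing tree the maximal decreasing subtree is the whole tree, so
`y(n, n)` counts the same trees.
-/

theorem Set.EqOn.iterate_apply {α : Type*} {f g : α → α} {s : Set α} (hfg : Set.EqOn f g s)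
    (hf : Set.MapsTo f s s) {x : α} (hx : x ∈ s) (k : ℕ) : f^[k] x = g^[k] x := by
  induction k with
  | zero => rfl
  | succ k ih =>
    rw [Function.iterate_succ_apply', Function.iterate_succ_apply', ← ih]
    exact hfg (hf.iterate k hx)

namespace PForest

variable {p : ℕ}

theorem ext {T₁ T₂ : PForest p} (hverts : T₁.verts = T₂.verts)
    (hpar : T₁.par = T₂.par) : T₁ = T₂ := by
  cases T₁; cases T₂; simp_all

theorem mem_verts_of_par_eq_some (T : PForest p) {v : ℕ} {ws : ℕ × Fin p}
    (h : T.par v = some ws) : v ∈ T.verts := by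
  by_contra hv
  simp [T.par_eq_none_of_not_mem v hv] at h

theorem step_mem_verts (T : PForest p) {v : ℕ} (hv : v ∈ T.verts) : T.step v ∈ T.verts := by
  unfold step
  cases h : T.par v with
  | none => exact hv
  | some ws => exact T.par_mem v hv ws.1 ws.2 h

theorem reaches_root_of_eqOn (T : PForest p) {par' : ℕ → Option (ℕ × Fin p)} {s : Set ℕ}
    (hs : Set.MapsTo T.step s s) (hpar : Set.EqOn T.par par' s) {v : ℕ} (hvT : v ∈ T.verts)
    (hvs : v ∈ s) : ∃ k, par' ((fun x => ((par' x).map Prod.fst).getD x)^[k] v) = none := by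
  have hstep : Set.EqOn T.step (fun x => ((par' x).map Prod.fst).getD x) s := fun x hx => by
    simp only [step, hpar hx]
  obtain ⟨k, hk⟩ := T.reaches_root v hvT
  refine ⟨k, ?_⟩
  rw [← hstep.iterate_apply hs hvs, ← hpar (hs.iterate k hvs)]
  exact hk

noncomputable def freeSlots (T : PForest p) : Finset (ℕ × Fin p) :=
  (T.verts ×ˢ Finset.univ).filter fun ws => ∀ u, T.par u ≠ some ws

theorem mem_verts_of_mem_freeSlots (T : PForest p) {ws : ℕ × Fin p}
    (hws : ws ∈ T.freeSlots) : ws.1 ∈ T.verts :=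
  (Finset.mem_product.mp (Finset.mem_filter.mp hws).1).1

theorem par_ne_of_mem_freeSlots (T : PForest p) {ws : ℕ × Fin p} (hws : ws ∈ T.freeSlots)
    (u : ℕ) : T.par u ≠ some ws :=
  (Finset.mem_filter.mp hws).2 u

theorem card_nonroots_eq_card_occupied (T : PForest p) :
    (T.verts.filter fun v => ¬ T.par v = none).card =
      ((T.verts ×ˢ Finset.univ).filter fun ws => ¬ ∀ u, T.par u ≠ some ws).card := by
  have hsome {v : ℕ} (hv : v ∈ T.verts.filter fun v => ¬ T.par v = none) :=
    Option.isSome_iff_ne_none.mpr (Finset.mem_filter.mp hv).2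
  refine Finset.card_bij (fun v hv => (T.par v).get (hsome hv)) (fun v hv => ?_)
    (fun v₁ hv₁ v₂ hv₂ h => ?_) fun ws hws => ?_
  · have hpar := (Option.some_get (hsome hv)).symm
    refine Finset.mem_filter.mpr ⟨Finset.mem_product.mpr ⟨?_, Finset.mem_univ _⟩,
      fun hfree => hfree v hpar⟩
    exact T.par_mem v (Finset.mem_filter.mp hv).1 _ _ hpar
  · have h₁ := (Option.some_get (hsome hv₁)).symm
    exact T.par_inj v₁ (Finset.mem_filter.mp hv₁).1 v₂ (Finset.mem_filter.mp hv₂).1 _ _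
      h₁ (Option.get_inj.mp h ▸ h₁)
  · obtain ⟨u, hu⟩ := not_forall_not.mp (Finset.mem_filter.mp hws).2
    exact ⟨u, Finset.mem_filter.mpr ⟨T.mem_verts_of_par_eq_some hu, by simp [hu]⟩,
      by simp [hu]⟩

theorem card_freeSlots_add_card_verts (T : PForest p) :
    T.freeSlots.card + T.verts.card = T.verts.card * p + T.roots.card := by
  have hslots := Finset.card_filter_add_card_filter_not
    (s := T.verts ×ˢ (Finset.univ : Finset (Fin p))) (p := fun ws => ∀ u, T.par u ≠ some ws)
  have hverts := Finset.card_filter_add_card_filter_not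
    (s := T.verts) (p := fun v => T.par v = none)
  rw [Finset.card_product, Finset.card_fin, ← card_nonroots_eq_card_occupied] at hslots
  rw [freeSlots, roots]
  omega

def eraseLeaf (T : PForest p) (a : ℕ) (ha : T.IsLeaf a) : PForest p where
  verts := T.verts.erase a
  par := Function.update T.par a none
  par_eq_none_of_not_mem v hv := by
    by_cases hva : v = a
    · simp [hva]
    · rw [Function.update_of_ne hva]
      exact T.par_eq_none_of_not_mem v (by simpa [hva] using hv)
  par_mem v hv w s h := by
    have hva : v ≠ a := (Finset.mem_erase.mp hv).1
    rw [Function.update_of_ne hva] at h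
    exact Finset.mem_erase.mpr
      ⟨fun hwa => ha v s (hwa ▸ h), T.par_mem v (Finset.mem_of_mem_erase hv) w s h⟩
  par_inj u hu v hv w s hu' hv' := by
    rw [Function.update_of_ne (Finset.mem_erase.mp hu).1] at hu'
    rw [Function.update_of_ne (Finset.mem_erase.mp hv).1] at hv'
    exact T.par_inj u (Finset.mem_of_mem_erase hu) v (Finset.mem_of_mem_erase hv) w s hu' hv'
  reaches_root v hv := by
    refine T.reaches_root_of_eqOn (s := {a}ᶜ) ?_ ?_ (Finset.mem_of_mem_erase hv)
      (Finset.mem_erase.mp hv).1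
    · intro u hu
      simp only [Set.mem_compl_iff, Set.mem_singleton_iff, step] at hu ⊢
      cases h : T.par u with
      | none => exact hu
      | some ws => exact fun hwa => ha u ws.2 (hwa ▸ h)
    · intro u hu
      exact (Function.update_of_ne hu _ _).symm

def attachLeaf (T : PForest p) (a : ℕ) (ws : ℕ × Fin p) (ha : a ∉ T.verts)
    (hws : ws ∈ T.freeSlots) : PForest p where
  verts := insert a T.verts
  par := Function.update T.par a (some ws)
  par_eq_none_of_not_mem v hv := by
    rw [Finset.mem_insert, not_or] at hv
    rw [Function.update_of_ne hv.1]
    exact T.par_eq_none_of_not_mem v hv.2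
  par_mem v hv w s h := by
    by_cases hva : v = a
    · rw [hva, Function.update_self, Option.some_inj] at h
      subst h
      exact Finset.mem_insert_of_mem (T.mem_verts_of_mem_freeSlots hws)
    · rw [Function.update_of_ne hva] at h
      exact Finset.mem_insert_of_mem
        (T.par_mem v ((Finset.mem_insert.mp hv).resolve_left hva) w s h)
  par_inj u hu v hv w s hu' hv' := by
    have hfree := T.par_ne_of_mem_freeSlots hws
    by_cases hua : u = a <;> by_cases hva : v = a
    · rw [hua, hva]
    · rw [hua, Function.update_self] at hu'
      rw [Function.update_of_ne hva, ← hu'] at hv'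
      exact absurd hv' (hfree v)
    · rw [hva, Function.update_self] at hv'
      rw [Function.update_of_ne hua, ← hv'] at hu'
      exact absurd hu' (hfree u)
    · rw [Function.update_of_ne hua] at hu'
      rw [Function.update_of_ne hva] at hv'
      exact T.par_inj u ((Finset.mem_insert.mp hu).resolve_left hua)
        v ((Finset.mem_insert.mp hv).resolve_left hva) w s hu' hv'
  reaches_root v hv := by
    have hmaps : Set.MapsTo T.step T.verts T.verts := fun u hu => T.step_mem_verts hu
    have heq : Set.EqOn T.par (Function.update T.par a (some ws)) T.verts :=
      fun u hu => (Function.update_of_ne (ne_of_mem_of_not_mem hu ha) _ _).symm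
    obtain rfl | hv := Finset.mem_insert.mp hv
    · have hw := T.mem_verts_of_mem_freeSlots hws
      obtain ⟨k, hk⟩ := T.reaches_root_of_eqOn hmaps heq hw hw
      exact ⟨k + 1, by simpa [Function.iterate_succ_apply] using hk⟩
    · exact T.reaches_root_of_eqOn hmaps heq hv hv

theorem verts_eraseLeaf (T : PForest p) {a : ℕ} (ha : T.IsLeaf a) :
    (T.eraseLeaf a ha).verts = T.verts.erase a := rfl

theorem verts_attachLeaf (T : PForest p) {a : ℕ} {ws : ℕ × Fin p} (ha : a ∉ T.verts)
    (hws : ws ∈ T.freeSlots) : (T.attachLeaf a ws ha hws).verts = insert a T.verts := rfl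

theorem isLeaf_attachLeaf (T : PForest p) {a : ℕ} {ws : ℕ × Fin p} (ha : a ∉ T.verts)
    (hws : ws ∈ T.freeSlots) : (T.attachLeaf a ws ha hws).IsLeaf a := by
  intro u s hu
  simp only [attachLeaf] at hu
  by_cases hua : u = a
  · rw [hua, Function.update_self, Option.some_inj] at hu
    subst hu
    exact ha (T.mem_verts_of_mem_freeSlots hws)
  · rw [Function.update_of_ne hua] at hu
    exact ha (T.par_mem u (T.mem_verts_of_par_eq_some hu) a s hu)

theorem mem_freeSlots_eraseLeaf (T : PForest p) {a : ℕ} {ws : ℕ × Fin p} (ha : T.IsLeaf a)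
    (hpar : T.par a = some ws) : ws ∈ (T.eraseLeaf a ha).freeSlots := by
  have haT := T.mem_verts_of_par_eq_some hpar
  refine Finset.mem_filter.mpr
    ⟨Finset.mem_product.mpr ⟨Finset.mem_erase.mpr ⟨?_, ?_⟩, Finset.mem_univ _⟩, ?_⟩
  · exact fun hwa => ha a ws.2 (by rw [hpar, ← hwa])
  · exact T.par_mem a haT ws.1 ws.2 hpar
  · intro u hu
    by_cases hua : u = a
    · simp [eraseLeaf, hua] at hu
    · simp only [eraseLeaf, Function.update_of_ne hua] at hu
      exact hua (T.par_inj u (T.mem_verts_of_par_eq_some hu) a haT ws.1 ws.2 hu hpar)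

theorem eraseLeaf_attachLeaf (T : PForest p) {a : ℕ} {ws : ℕ × Fin p} (ha : a ∉ T.verts)
    (hws : ws ∈ T.freeSlots) :
    (T.attachLeaf a ws ha hws).eraseLeaf a (T.isLeaf_attachLeaf ha hws) = T := by
  refine ext (Finset.erase_insert ha) ?_
  simp only [eraseLeaf, attachLeaf, Function.update_idem]
  exact Function.update_eq_self_iff.mpr (T.par_eq_none_of_not_mem a ha).symm

theorem attachLeaf_eraseLeaf (T : PForest p) {a : ℕ} {ws : ℕ × Fin p} (ha : T.IsLeaf a)
    (hpar : T.par a = some ws) :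
    (T.eraseLeaf a ha).attachLeaf a ws (Finset.notMem_erase a T.verts)
      (T.mem_freeSlots_eraseLeaf ha hpar) = T := by
  refine ext (Finset.insert_erase (T.mem_verts_of_par_eq_some hpar)) ?_
  simp only [eraseLeaf, attachLeaf, Function.update_idem]
  exact Function.update_eq_self_iff.mpr hpar.symm

theorem roots_eraseLeaf (T : PForest p) {a : ℕ} (ha : T.IsLeaf a) :
    (T.eraseLeaf a ha).roots = T.roots.erase a := by
  ext v
  rw [roots, roots, Finset.mem_filter, Finset.mem_erase, Finset.mem_filter]
  simp only [eraseLeaf]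
  by_cases hva : v = a <;> simp [hva]

theorem roots_attachLeaf (T : PForest p) {a : ℕ} {ws : ℕ × Fin p} (ha : a ∉ T.verts)
    (hws : ws ∈ T.freeSlots) : (T.attachLeaf a ws ha hws).roots = T.roots := by
  ext v
  rw [roots, roots, Finset.mem_filter, Finset.mem_filter]
  simp only [attachLeaf]
  by_cases hva : v = a
  · simp [hva, ha]
  · simp [hva]

def IsDecreasing (T : PForest p) : Prop := ∀ v w s, T.par v = some (w, s) → v < w

namespace IsDecreasing

variable {T : PForest p}

theorem isLeaf_of_le (hT : T.IsDecreasing) {a : ℕ} (ha : ∀ v ∈ T.verts, a ≤ v) :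
    T.IsLeaf a :=
  fun u s hu => (hT u a s hu).not_ge (ha u (T.mem_verts_of_par_eq_some hu))

theorem eraseLeaf (hT : T.IsDecreasing) {a : ℕ} (ha : T.IsLeaf a) :
    (T.eraseLeaf a ha).IsDecreasing := by
  intro v w s h
  by_cases hva : v = a
  · simp [PForest.eraseLeaf, hva] at h
  · exact hT v w s (by simpa [PForest.eraseLeaf, hva] using h)

theorem attachLeaf (hT : T.IsDecreasing) {a : ℕ} {ws : ℕ × Fin p} (ha : a ∉ T.verts)
    (hws : ws ∈ T.freeSlots) (haw : a < ws.1) : (T.attachLeaf a ws ha hws).IsDecreasing := by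
  intro v w s h
  by_cases hva : v = a
  · simp only [PForest.attachLeaf, hva, Function.update_self, Option.some_inj] at h
    rwa [hva, ← show ws.1 = w by rw [h]]
  · exact hT v w s (by simpa [PForest.attachLeaf, hva] using h)

theorem par_max'_eq_none (hT : T.IsDecreasing) (hne : T.verts.Nonempty) :
    T.par (T.verts.max' hne) = none := by
  rw [Option.eq_none_iff_forall_ne_some]
  rintro ⟨w, s⟩ h
  exact (hT _ w s h).not_ge (T.verts.le_max' w (T.par_mem _ (T.verts.max'_mem hne) w s h))

theorem roots_eq_singleton_max' (hT : T.IsDecreasing) (hne : T.verts.Nonempty)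
    (hroots : T.roots.card = 1) : T.roots = {T.verts.max' hne} := by
  obtain ⟨r, hr⟩ := Finset.card_eq_one.mp hroots
  have hmax : T.verts.max' hne ∈ T.roots :=
    Finset.mem_filter.mpr ⟨T.verts.max'_mem hne, hT.par_max'_eq_none hne⟩
  rw [hr, Finset.mem_singleton] at hmax
  rw [hr, hmax]

end IsDecreasing

theorem card_freeSlots_of_card_roots_eq_one (T : PForest p) (hp : 1 ≤ p)
    (hroots : T.roots.card = 1) : T.freeSlots.card = 1 + (p - 1) * T.verts.card := by
  have h := T.card_freeSlots_add_card_verts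
  rw [hroots] at h
  obtain ⟨q, rfl⟩ := Nat.exists_eq_add_of_le' hp
  rw [Nat.add_sub_cancel]
  linarith

def discrete (S : Finset ℕ) : PForest p where
  verts := S
  par _ := none
  par_eq_none_of_not_mem _ _ := rfl
  par_mem _ _ _ _ h := nomatch h
  par_inj _ _ _ _ _ _ h := nomatch h
  reaches_root _ _ := ⟨0, rfl⟩

def IsDecreasingTreeOn (T : PForest p) (S : Finset ℕ) : Prop :=
  T.verts = S ∧ T.roots.card = min S.card 1 ∧ T.IsDecreasing

theorem isDecreasingTreeOn_discrete {S : Finset ℕ} (hS : S.card ≤ 1) :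
    (discrete S : PForest p).IsDecreasingTreeOn S := by
  have hroots : (discrete S : PForest p).roots = S := Finset.filter_true_of_mem fun _ _ => rfl
  exact ⟨rfl, by rw [hroots, min_eq_left hS], fun _ _ _ h => nomatch h⟩

namespace IsDecreasingTreeOn

variable {T : PForest p} {a : ℕ} {S : Finset ℕ}

theorem card_roots_eq_one (hT : T.IsDecreasingTreeOn S) (hS : S.Nonempty) : T.roots.card = 1 :=
  hT.2.1.trans (min_eq_right (Finset.card_pos.mpr hS))

theorem eq_discrete_of_card_le_one (hT : T.IsDecreasingTreeOn S) (hS : S.card ≤ 1) :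
    T = discrete S := by
  refine ext hT.1 (funext fun v => Option.eq_none_iff_forall_ne_some.mpr ?_)
  rintro ⟨w, s⟩ h
  have hv : v ∈ S := hT.1 ▸ T.mem_verts_of_par_eq_some h
  have hw : w ∈ S := hT.1 ▸ T.par_mem v (T.mem_verts_of_par_eq_some h) w s h
  exact (hT.2.2 v w s h).ne (Finset.card_le_one.mp hS v hv w hw)

theorem notMem_verts (hT : T.IsDecreasingTreeOn S) (haS : ∀ x ∈ S, a < x) : a ∉ T.verts :=
  fun ha => (haS a (hT.1 ▸ ha)).false

theorem isLeaf (hT : T.IsDecreasingTreeOn (insert a S)) (haS : ∀ x ∈ S, a < x) : T.IsLeaf a :=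
  hT.2.2.isLeaf_of_le fun v hv => by
    obtain rfl | hv := Finset.mem_insert.mp (hT.1 ▸ hv)
    exacts [le_rfl, (haS v hv).le]

theorem par_ne_none (hT : T.IsDecreasingTreeOn (insert a S)) (hS : S.Nonempty)
    (haS : ∀ x ∈ S, a < x) : T.par a ≠ none := by
  intro h
  have hne : T.verts.Nonempty := hT.1 ▸ Finset.insert_nonempty a S
  have hroot : a ∈ T.roots := Finset.mem_filter.mpr ⟨hT.1 ▸ Finset.mem_insert_self a S, h⟩
  rw [hT.2.2.roots_eq_singleton_max' hne (hT.card_roots_eq_one (Finset.insert_nonempty a S)),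
    Finset.mem_singleton] at hroot
  obtain ⟨x, hx⟩ := hS
  exact (haS x hx).not_ge (hroot ▸ T.verts.le_max' x (hT.1 ▸ Finset.mem_insert_of_mem hx))

theorem eraseLeaf (hT : T.IsDecreasingTreeOn (insert a S)) (hS : S.Nonempty)
    (haS : ∀ x ∈ S, a < x) : (T.eraseLeaf a (hT.isLeaf haS)).IsDecreasingTreeOn S := by
  refine ⟨?_, ?_, hT.2.2.eraseLeaf _⟩
  · rw [verts_eraseLeaf, hT.1]
    exact Finset.erase_insert fun ha => (haS a ha).false
  · have ha : a ∉ T.roots := fun ha => hT.par_ne_none hS haS (Finset.mem_filter.mp ha).2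
    rw [roots_eraseLeaf, Finset.erase_eq_of_notMem ha,
      hT.card_roots_eq_one (Finset.insert_nonempty a S)]
    exact (min_eq_right (Finset.card_pos.mpr hS)).symm

theorem attachLeaf (hT : T.IsDecreasingTreeOn S) (haS : ∀ x ∈ S, a < x) {ws : ℕ × Fin p}
    (hws : ws ∈ T.freeSlots) :
    (T.attachLeaf a ws (hT.notMem_verts haS) hws).IsDecreasingTreeOn (insert a S) := by
  have hw : ws.1 ∈ S := hT.1 ▸ T.mem_verts_of_mem_freeSlots hws
  refine ⟨by rw [verts_attachLeaf, hT.1], ?_, hT.2.2.attachLeaf _ hws (haS _ hw)⟩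
  rw [roots_attachLeaf, hT.card_roots_eq_one ⟨_, hw⟩]
  exact (min_eq_right (Finset.card_pos.mpr (Finset.insert_nonempty a S))).symm

end IsDecreasingTreeOn

variable {a : ℕ} {S : Finset ℕ}

noncomputable def eraseMinEquiv (hS : S.Nonempty) (haS : ∀ x ∈ S, a < x) :
    {T : PForest p // T.IsDecreasingTreeOn (insert a S)} ≃
      Σ T : {T : PForest p // T.IsDecreasingTreeOn S}, T.1.freeSlots where
  toFun T :=
    have hpar :=
      (Option.some_get (Option.isSome_iff_ne_none.mpr (T.2.par_ne_none hS haS))).symm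
    ⟨⟨T.1.eraseLeaf a (T.2.isLeaf haS), T.2.eraseLeaf hS haS⟩,
      ⟨_, T.1.mem_freeSlots_eraseLeaf (T.2.isLeaf haS) hpar⟩⟩
  invFun T := ⟨_, T.1.2.attachLeaf haS T.2.2⟩
  left_inv T := Subtype.ext (T.1.attachLeaf_eraseLeaf (T.2.isLeaf haS) (Option.some_get _).symm)
  right_inv T := Sigma.subtype_ext
    (Subtype.ext (T.1.1.eraseLeaf_attachLeaf (T.1.2.notMem_verts haS) T.2.2))
    (Option.some_inj.mp (by simp [attachLeaf]))

theorem nat_card_isDecreasingTreeOn_insert (hp : 1 ≤ p) (hS : S.Nonempty)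
    (haS : ∀ x ∈ S, a < x) :
    Nat.card {T : PForest p // T.IsDecreasingTreeOn (insert a S)} =
      Nat.card {T : PForest p // T.IsDecreasingTreeOn S} * (1 + (p - 1) * S.card) := by
  have hslots (T : {T : PForest p // T.IsDecreasingTreeOn S}) :
      Fintype.card T.1.freeSlots = 1 + (p - 1) * S.card := by
    rw [Fintype.card_coe, T.1.card_freeSlots_of_card_roots_eq_one hp (T.2.card_roots_eq_one hS),
      T.2.1]
  rw [Nat.card_congr ((eraseMinEquiv hS haS).trans
      ((Equiv.sigmaCongrRight fun T => Fintype.equivFinOfCardEq (hslots T)).trans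
        (Equiv.sigmaEquivProd _ _))),
    Nat.card_prod, Nat.card_eq_fintype_card (α := Fin _), Fintype.card_fin]

theorem nat_card_isDecreasingTreeOn_of_card_le_one (hS : S.card ≤ 1) :
    Nat.card {T : PForest p // T.IsDecreasingTreeOn S} = 1 :=
  Nat.card_eq_one_iff_unique.mpr
    ⟨⟨fun T₁ T₂ => Subtype.ext ((T₁.2.eq_discrete_of_card_le_one hS).trans
      (T₂.2.eq_discrete_of_card_le_one hS).symm)⟩,
    ⟨⟨_, isDecreasingTreeOn_discrete hS⟩⟩⟩

theorem nat_card_isDecreasingTreeOn (hp : 1 ≤ p) (S : Finset ℕ) :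
    Nat.card {T : PForest p // T.IsDecreasingTreeOn S} =
      ∏ j ∈ Finset.range S.card, (1 + (p - 1) * j) := by
  induction S using Finset.induction_on_min with
  | empty => simpa using nat_card_isDecreasingTreeOn_of_card_le_one (p := p) (S := ∅) (by simp)
  | insert a S haS ih =>
    obtain rfl | hS := S.eq_empty_or_nonempty
    · simpa using nat_card_isDecreasingTreeOn_of_card_le_one (p := p) (S := {a}) (by simp)
    · rw [nat_card_isDecreasingTreeOn_insert hp hS haS, ih,
        Finset.card_insert_of_notMem fun ha => (haS a ha).false, Finset.prod_range_succ]

theorem IsDecreasing.inMD {T : PForest p} (hT : T.IsDecreasing) {v : ℕ} (hv : v ∈ T.verts) :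
    T.InMD v :=
  ⟨hv, fun _ w s h => hT _ w s h⟩

theorem isDecreasing_iff_card_mdSet (T : PForest p) :
    T.IsDecreasing ↔ T.mdSet.card = T.verts.card := by
  refine ⟨fun hT => congrArg Finset.card (Finset.filter_true_of_mem fun v hv => hT.inMD hv),
    fun hcard v w s h => ?_⟩
  have hmd : T.mdSet = T.verts :=
    Finset.eq_of_subset_of_card_le (Finset.filter_subset _ _) hcard.ge
  have hv : v ∈ T.mdSet := hmd ▸ T.mem_verts_of_par_eq_some h
  exact (Finset.mem_filter.mp hv).2.2 0 w s h

theorem isTreeOn_and_isDecreasing_iff (T : PForest p) (n : ℕ) :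
    T.IsTreeOn n ∧ T.IsDecreasing ↔ T.IsDecreasingTreeOn (Finset.Icc 1 n) := by
  simp only [IsTreeOn, IsDecreasingTreeOn, Nat.card_Icc, Nat.add_sub_cancel, and_assoc]

theorem isTreeOn_and_card_mdSet_iff (T : PForest p) (n : ℕ) :
    (T.IsTreeOn n ∧ T.mdSet.card = n ∧ ∀ v ∈ T.verts, ¬ T.InMD v → T.IsLeaf v) ↔
      T.IsTreeOn n ∧ T.IsDecreasing := by
  refine and_congr_right fun hT => ?_
  have hn : T.verts.card = n := by rw [hT.1, Nat.card_Icc, Nat.add_sub_cancel]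
  rw [T.isDecreasing_iff_card_mdSet, hn]
  exact ⟨And.left, fun hmd => ⟨hmd, fun v hv hnot =>
    absurd ((T.isDecreasing_iff_card_mdSet.mpr (hmd.trans hn.symm)).inMD hv) hnot⟩⟩

end PForest

theorem stmt3_general (p n : ℕ) (hp : 2 ≤ p) :
    Nat.card {T : PForest p // T.IsTreeOn n ∧ ∀ v w s, T.par v = some (w, s) → v < w}
        = ∏ j ∈ Finset.range n, (1 + (p - 1) * j) ∧
    y p n n = ∏ j ∈ Finset.range n, (1 + (p - 1) * j) := by
  have hdec : Nat.card {T : PForest p // T.IsTreeOn n ∧ T.IsDecreasing} =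
      ∏ j ∈ Finset.range n, (1 + (p - 1) * j) := by
    rw [Nat.card_congr (Equiv.subtypeEquivRight fun T => T.isTreeOn_and_isDecreasing_iff n),
      PForest.nat_card_isDecreasingTreeOn (by omega), Nat.card_Icc, Nat.add_sub_cancel]
  refine ⟨hdec, ?_⟩
  rw [y, ← hdec]
  exact Nat.card_congr (Equiv.subtypeEquivRight fun T => T.isTreeOn_and_card_mdSet_iff n)

/-- The number of decreasing `p`-ary labeled trees on `[n]` equals
`∏_{j=0}^{n-1} (1 + (p-1)j)`; equivalently `y(n,n)` equals this product. -/
theorem stmt3 (p n : ℕ) (hp : 2 ≤ p) (hn : 1 ≤ n) :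
    Nat.card {T : PForest p // T.IsTreeOn n ∧ ∀ v w s, T.par v = some (w, s) → v < w}
        = ∏ j ∈ Finset.range n, (1 + (p - 1) * j) ∧
    y p n n = ∏ j ∈ Finset.range n, (1 + (p - 1) * j) :=
  stmt3_general p n hp
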